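/- arXiv:2604.24206 — 5 statements merged into one kernel-verified Lean document; each statement's English description precedes it below -/
import Mathlib

section
/- Let A be a unital C*-algebra, let x₁, …, x_n ∈ A, let x = Σ_{i=1}^n x_i* x_i, and let p ∈ A satisfy 0 ≤ p ≤ 1. Then for each i one has ‖x_i − x_i·p‖² ≤ ‖x − p·x‖. In particular, if ‖x − p·x‖ < ε² for some ε > 0, then ‖x_i − x_i·p‖ < ε for all i. -/
/-!
Put `q = 1 - p`, so `xᵢ - xᵢ p = xᵢ q` and `x - p x = q x`. By the C*-identity
`‖xᵢ q‖² = ‖q xᵢ* xᵢ q‖`; since `0 ≤ xᵢ* xᵢ ≤ x` and conjugation is monotone, this is at most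
`‖q x q‖ ≤ ‖q x‖ ‖q‖`, and `0 ≤ q ≤ 1` gives `‖q‖ ≤ 1`.
-/

theorem norm_mul_sq_le_norm_star_mul {A : Type*} [NonUnitalCStarAlgebra A] [PartialOrder A]
    [StarOrderedRing A] {a b c : A} (hab : star a * a ≤ b) (hc : ‖c‖ ≤ 1) :
    ‖a * c‖ ^ 2 ≤ ‖star c * b‖ :=
  calc ‖a * c‖ ^ 2 = ‖star c * (star a * a) * c‖ := by
        rw [sq, ← CStarRing.norm_star_mul_self, star_mul, mul_assoc, mul_assoc, mul_assoc]
    _ ≤ ‖star c * b * c‖ := CStarAlgebra.norm_le_norm_of_nonneg_of_le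
        (star_left_conjugate_nonneg (star_mul_self_nonneg a) c)
        (star_left_conjugate_le_conjugate hab c)
    _ ≤ ‖star c * b‖ * ‖c‖ := norm_mul_le _ _
    _ ≤ ‖star c * b‖ := mul_le_of_le_one_right (norm_nonneg _) hc

theorem norm_one_sub_le_one {A : Type*} [CStarAlgebra A] [PartialOrder A] [StarOrderedRing A]
    {p : A} (hp0 : 0 ≤ p) (hp1 : p ≤ 1) : ‖1 - p‖ ≤ 1 :=
  (CStarAlgebra.norm_le_one_iff_of_nonneg _ (sub_nonneg.2 hp1)).2 (sub_le_self _ hp0)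

/-- Let `x₁, …, xₙ` be elements of a unital C*-algebra, let `x = Σ xᵢ* xᵢ` and let
`0 ≤ p ≤ 1`.  Then `‖xᵢ - xᵢ·p‖² ≤ ‖x - p·x‖` for each `i`; in particular, if
`‖x - p·x‖ < ε²` then `‖xᵢ - xᵢ·p‖ < ε` for all `i`. -/
theorem norm_sub_mul_sq_le {A : Type*} [CStarAlgebra A] [PartialOrder A] [StarOrderedRing A]
    {n : ℕ} (x : Fin n → A) (p : A) (hp0 : 0 ≤ p) (hp1 : p ≤ 1) :
    (∀ i, ‖x i - x i * p‖ ^ 2 ≤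
      ‖(∑ j, star (x j) * x j) - p * ∑ j, star (x j) * x j‖) ∧
    (∀ ε : ℝ, 0 < ε →
      ‖(∑ j, star (x j) * x j) - p * ∑ j, star (x j) * x j‖ < ε ^ 2 →
      ∀ i, ‖x i - x i * p‖ < ε) := by
  have hq : IsSelfAdjoint (1 - p) := .of_nonneg (sub_nonneg.2 hp1)
  have key : ∀ i, ‖x i - x i * p‖ ^ 2 ≤
      ‖(∑ j, star (x j) * x j) - p * ∑ j, star (x j) * x j‖ := fun i => by
    have hi : star (x i) * x i ≤ ∑ j, star (x j) * x j :=
      Finset.single_le_sum (fun j _ => star_mul_self_nonneg (x j)) (Finset.mem_univ i)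
    simpa only [hq.star_eq, mul_one_sub, one_sub_mul] using
      norm_mul_sq_le_norm_star_mul hi (norm_one_sub_le_one hp0 hp1)
  exact ⟨key, fun ε hε hlt i => lt_of_pow_lt_pow_left₀ 2 hε.le ((key i).trans_lt hlt)⟩
end

section
/- Let A be a unital C*-algebra and let τ be a faithful tracial state on A (a linear functional with τ(1) = 1, τ(x*x) ≥ 0 with equality only when x = 0, and τ(xy) = τ(yx) for all x, y ∈ A). Let (u_n) be a sequence of unitaries in A and let u ∈ A with ‖u‖ ≤ 1. If ‖u_n − u‖_{2,τ} → 0 as n → ∞, then u is a unitary, i.e. u*u = 1 = uu*. -/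
open scoped ComplexOrder

/-- The 2-seminorm `‖x‖_{2,τ} = (τ(x*x))^{1/2}` associated to a positive tracial
linear functional `τ`. -/
noncomputable def norm2 {A : Type*} [NonUnitalRing A] [StarRing A] [Module ℂ A]
    (τ : A →ₗ[ℂ] ℂ) (x : A) : ℝ :=
  Real.sqrt (τ (star x * x)).re

section aux
variable {A : Type*} [CStarAlgebra A] (τ : A →ₗ[ℂ] ℂ)

theorem tau_im (hτpos : ∀ x : A, 0 ≤ τ (star x * x)) (x : A) :
    (τ (star x * x)).im = 0 := by
  have h := hτpos x
  rw [Complex.le_def] at h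
  simpa using h.2.symm

theorem tau_re_nonneg (hτpos : ∀ x : A, 0 ≤ τ (star x * x)) (x : A) :
    0 ≤ (τ (star x * x)).re := by
  have h := hτpos x
  rw [Complex.le_def] at h
  simpa using h.1

theorem tau_star (hτpos : ∀ x : A, 0 ≤ τ (star x * x)) (a : A) :
    τ (star a) = starRingEnd ℂ (τ a) := by
  have hb : ∀ c : ℂ, star (a + c • 1) * (a + c • 1)
      = star a * a + c • star a + (starRingEnd ℂ c) • a + (starRingEnd ℂ c * c) • (1 : A) := by
    intro c
    simp only [star_add, star_smul, star_one, add_mul, mul_add, smul_mul_assoc,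
      mul_smul_comm, smul_smul, mul_one, one_mul, Complex.star_def, smul_add]
    module
  have hf : ∀ c : ℂ, τ (star (a + c • 1) * (a + c • 1))
      = τ (star a * a) + c * τ (star a) + (starRingEnd ℂ c) * τ a
        + (starRingEnd ℂ c * c) * τ 1 := by
    intro c
    rw [hb]
    simp [smul_eq_mul]
  have h1 := tau_im τ hτpos (a + (1:ℂ) • 1)
  have hI := tau_im τ hτpos (a + Complex.I • 1)
  rw [hf] at h1 hI
  have hQ := tau_im τ hτpos a
  have h1' := tau_im τ hτpos (1 : A)
  rw [show star (1:A) * 1 = 1 by simp] at h1'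
  simp only [map_one, one_mul, mul_one, Complex.conj_I, Complex.add_im, Complex.mul_im,
    Complex.I_re, Complex.I_im, Complex.neg_re, Complex.neg_im, Complex.mul_re,
    neg_mul, neg_neg] at h1 hI
  apply Complex.ext
  · simp only [Complex.conj_re]
    nlinarith [hQ, h1']
  · simp only [Complex.conj_im]
    nlinarith [hQ, h1']

/-- A contraction `w` with `τ(w*w) = 1` satisfies `w*w = 1`, for a faithful state `τ`. -/
theorem aux_unit (hτ1 : τ 1 = 1)
    (hτfaithful : ∀ x : A, τ (star x * x) = 0 → x = 0)
    (w : A) (hw : ‖w‖ ≤ 1) (hτw : τ (star w * w) = 1) : star w * w = 1 := by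
  letI := CStarAlgebra.spectralOrder A
  letI := CStarAlgebra.spectralOrderedRing A
  have ha : (0 : A) ≤ 1 - star w * w := by
    have h1 : star w * w ≤ algebraMap ℝ A (‖w‖ ^ 2) :=
      CStarAlgebra.star_mul_le_algebraMap_norm_sq
    have h2 : algebraMap ℝ A (‖w‖ ^ 2) ≤ 1 := by
      have hnn : (0 : A) ≤ (1 - ‖w‖ ^ 2) • 1 :=
        smul_nonneg (by nlinarith [norm_nonneg w]) zero_le_one
      have h3 : (1 - ‖w‖ ^ 2) • (1 : A) = 1 - algebraMap ℝ A (‖w‖ ^ 2) := by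
        rw [sub_smul, one_smul, Algebra.algebraMap_eq_smul_one]
      rw [h3] at hnn
      exact sub_nonneg.1 hnn
    exact sub_nonneg.2 (h1.trans h2)
  set a : A := 1 - star w * w with ha'
  have hsq : CFC.sqrt a * CFC.sqrt a = a := CFC.sqrt_mul_sqrt_self a ha
  have hsa : star (CFC.sqrt a) = CFC.sqrt a :=
    (IsSelfAdjoint.of_nonneg (CFC.sqrt_nonneg (a := a))).star_eq
  have hτa : τ a = 0 := by
    simp [ha', map_sub, hτ1, hτw]
  have hzero : CFC.sqrt a = 0 := by
    apply hτfaithful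
    rw [hsa, hsq, hτa]
  have haz : a = 0 := by rw [← hsq, hzero, mul_zero]
  have h0 : (1 : A) - star w * w = 0 := haz
  have := sub_eq_zero.mp h0
  exact this.symm

end aux

/-- Let `τ` be a faithful tracial state on a unital C*-algebra `A`, let `(uₙ)` be a
sequence of unitaries and let `u` be a contraction.  If `‖uₙ - u‖_{2,τ} → 0`, then `u`
is a unitary. -/
theorem limit_of_unitaries_is_unitary
    {A : Type*} [CStarAlgebra A]
    (τ : A →ₗ[ℂ] ℂ)
    (hτ1 : τ 1 = 1)
    (hτpos : ∀ x : A, 0 ≤ τ (star x * x))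
    (hτfaithful : ∀ x : A, τ (star x * x) = 0 → x = 0)
    (hτtr : ∀ x y : A, τ (x * y) = τ (y * x))
    (u : ℕ → A) (hu : ∀ n, star (u n) * u n = 1 ∧ u n * star (u n) = 1)
    (v : A) (hv1 : ‖v‖ ≤ 1)
    (hconv : Filter.Tendsto (fun n => norm2 τ (u n - v)) Filter.atTop (nhds 0)) :
    star v * v = 1 ∧ v * star v = 1 := by
  have him := tau_im τ hτpos
  have hre := tau_re_nonneg τ hτpos
  letI c : PreInnerProductSpace.Core ℂ A :=
    { inner := fun x y => τ (star x * y)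
      conj_inner_symm := fun x y => by
        show starRingEnd ℂ (τ (star y * x)) = τ (star x * y)
        rw [show star y * x = star (star x * y) by simp [star_mul], tau_star τ hτpos]
        simp
      re_inner_nonneg := fun x => by
        show (0:ℝ) ≤ RCLike.re (τ (star x * x))
        simpa using hre x
      add_left := fun x y z => by
        show τ (star (x + y) * z) = τ (star x * z) + τ (star y * z)
        simp [star_add, add_mul]
      smul_left := fun x y r => by
        show τ (star (r • x) * y) = starRingEnd ℂ r * τ (star x * y)
        simp [star_smul, smul_mul_assoc, Complex.star_def, smul_eq_mul] }
  have CS : ∀ x y : A, ‖τ (star x * y)‖ ≤ norm2 τ x * norm2 τ y := by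
    intro x y
    have h : ‖τ (star x * y)‖ * ‖τ (star y * x)‖
        ≤ (τ (star x * x)).re * (τ (star y * y)).re :=
      @InnerProductSpace.Core.inner_mul_inner_self_le ℂ A _ _ _ c x y
    have hyx : τ (star y * x) = starRingEnd ℂ (τ (star x * y)) := by
      rw [show star y * x = star (star x * y) by simp [star_mul], tau_star τ hτpos]
    rw [hyx, RCLike.norm_conj] at h
    rw [norm2, norm2, ← Real.sqrt_mul (hre x), ← Real.sqrt_mul_self (norm_nonneg _)]
    exact Real.sqrt_le_sqrt h
  have hNn : ∀ x : A, 0 ≤ norm2 τ x := fun x => Real.sqrt_nonneg _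
  have hNsq : ∀ x : A, norm2 τ x ^ 2 = (τ (star x * x)).re := fun x =>
    Real.sq_sqrt (hre x)
  have hN1 : ∀ n, norm2 τ (u n) = 1 := by
    intro n
    rw [norm2, (hu n).1, hτ1]
    simp
  have key : ∀ n, ‖τ (star v * v) - 1‖ ≤ norm2 τ (u n - v) ^ 2 + 2 * norm2 τ (u n - v) := by
    intro n
    set d := u n - v with hd
    have hexp : star v * v
        = star (u n) * u n - star d * u n - star (u n) * d + star d * d := by
      have hv : v = u n - d := by rw [hd]; abel
      rw [hv]
      simp only [star_sub, sub_mul, mul_sub]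
      abel
    have hτv : τ (star v * v) - 1
        = - τ (star d * u n) - τ (star (u n) * d) + τ (star d * d) := by
      rw [hexp]
      simp only [map_sub, map_add, (hu n).1, hτ1]
      ring
    rw [hτv]
    have b1 : ‖τ (star d * u n)‖ ≤ norm2 τ d * 1 := by
      simpa [hN1 n] using CS d (u n)
    have b2 : ‖τ (star (u n) * d)‖ ≤ 1 * norm2 τ d := by
      simpa [hN1 n] using CS (u n) d
    have b3 : ‖τ (star d * d)‖ ≤ norm2 τ d * norm2 τ d := CS d d
    calc ‖- τ (star d * u n) - τ (star (u n) * d) + τ (star d * d)‖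
        ≤ ‖- τ (star d * u n) - τ (star (u n) * d)‖ + ‖τ (star d * d)‖ := norm_add_le _ _
      _ ≤ (‖- τ (star d * u n)‖ + ‖τ (star (u n) * d)‖) + ‖τ (star d * d)‖ := by
          gcongr
          exact norm_sub_le _ _
      _ ≤ (norm2 τ d * 1 + 1 * norm2 τ d) + norm2 τ d * norm2 τ d := by
          rw [norm_neg]
          gcongr
      _ = norm2 τ d ^ 2 + 2 * norm2 τ d := by ring
  have hlim : Filter.Tendsto (fun n => norm2 τ (u n - v) ^ 2 + 2 * norm2 τ (u n - v))
      Filter.atTop (nhds 0) := by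
    have := (hconv.pow 2).add (hconv.const_mul 2)
    simpa using this
  have hle : ‖τ (star v * v) - 1‖ ≤ 0 := ge_of_tendsto' hlim key
  have hv2 : τ (star v * v) = 1 := by
    have h0 := norm_le_zero_iff.mp hle
    exact sub_eq_zero.mp h0
  refine ⟨aux_unit τ hτ1 hτfaithful v hv1 hv2, ?_⟩
  have h2 : τ (star (star v) * star v) = 1 := by
    rw [star_star, hτtr]
    exact hv2
  have h3 := aux_unit τ hτ1 hτfaithful (star v) (by rwa [norm_star]) h2
  rwa [star_star] at h3
end

section
/- Let E be a Hausdorff locally convex real topological vector space and let X ⊆ E be a nonempty compact convex subset. Let φ : C(X, ℝ) → ℝ be an ℝ-linear functional such that φ(f) ≥ 0 whenever f ≥ 0 pointwise, and φ(1) = 1 where 1 is the constant function with value 1. Then there exists x₀ ∈ X such that φ(f) = f(x₀) for every continuous function f : X → ℝ that is affine, i.e. satisfies f(t·x + (1 − t)·y) = t·f(x) + (1 − t)·f(y) for all x, y ∈ X and t ∈ [0,1]. -/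
/-- Let `X` be a nonempty compact convex subset of a Hausdorff locally convex real
topological vector space and let `φ : C(X, ℝ) → ℝ` be a linear functional which is positive
and satisfies `φ(1) = 1`.  Then there is a point `x₀ ∈ X` at which `φ` is given by
evaluation on all continuous affine functions on `X` (the barycentre of the representing
measure). -/
theorem state_is_evaluation_on_affine_functions
    {E : Type*} [AddCommGroup E] [Module ℝ E] [TopologicalSpace E]
    [IsTopologicalAddGroup E] [ContinuousSMul ℝ E] [T2Space E] [LocallyConvexSpace ℝ E]
    (X : Set E) (hXne : X.Nonempty) (hXcpt : IsCompact X) (hXconv : Convex ℝ X)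
    (φ : C(X, ℝ) →ₗ[ℝ] ℝ)
    (hφpos : ∀ f : C(X, ℝ), (∀ x, 0 ≤ f x) → 0 ≤ φ f)
    (hφ1 : φ 1 = 1) :
    ∃ (x₀ : E) (hx₀ : x₀ ∈ X),
      ∀ f : C(X, ℝ),
        (∀ (x y : E) (hx : x ∈ X) (hy : y ∈ X) (t : ℝ) (ht0 : 0 ≤ t) (ht1 : t ≤ 1),
          f ⟨t • x + (1 - t) • y,
              hXconv hx hy ht0 (by linarith) (by ring)⟩ = t * f ⟨x, hx⟩ + (1 - t) * f ⟨y, hy⟩) →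
        φ f = f ⟨x₀, hx₀⟩ := by
  classical
  -- restriction of a continuous linear functional to `X`
  set rest : (E →L[ℝ] ℝ) → C(X, ℝ) :=
    fun ℓ => ⟨fun x => ℓ x, ℓ.continuous.comp continuous_subtype_val⟩ with hrest
  -- monotonicity of φ against constants
  have hmono : ∀ (g : C(X, ℝ)) (b : ℝ), (∀ x, g x ≤ b) → φ g ≤ b := by
    intro g b hb
    have h0 : (0:ℝ) ≤ φ (b • (1 : C(X,ℝ)) - g) := by
      apply hφpos
      intro x
      simp only [ContinuousMap.sub_apply, ContinuousMap.smul_apply, ContinuousMap.one_apply,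
        smul_eq_mul, mul_one]
      linarith [hb x]
    have : φ (b • (1 : C(X,ℝ)) - g) = b - φ g := by
      rw [map_sub, map_smul, hφ1]; simp
    linarith [this ▸ h0]
  -- Step 1: find x₀ with ℓ x₀ = φ (rest ℓ) for every continuous linear functional ℓ.
  have key : (X ∩ ⋂ ℓ : E →L[ℝ] ℝ, {x : E | ℓ x = φ (rest ℓ)}).Nonempty := by
    apply hXcpt.inter_iInter_nonempty
    · intro ℓ
      exact isClosed_eq ℓ.continuous continuous_const
    · intro u
      -- separate in `↥u → ℝ`
      by_contra hcon
      set L : E →L[ℝ] (↥u → ℝ) := ContinuousLinearMap.pi (fun i => (i : E →L[ℝ] ℝ)) with hL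
      set c : ↥u → ℝ := fun i => φ (rest i) with hc
      have hcnot : c ∉ L '' X := by
        rintro ⟨x, hx, hLx⟩
        apply hcon
        refine ⟨x, hx, ?_⟩
        simp only [Set.mem_iInter]
        intro ℓ hℓ
        have := congrFun hLx ⟨ℓ, hℓ⟩
        simpa [L, c] using this
      have himgcpt : IsCompact (L '' X) := hXcpt.image L.continuous
      have himgconv : Convex ℝ (L '' X) := hXconv.is_linear_image ⟨L.map_add, L.map_smul⟩
      obtain ⟨Λ, b, hΛ1, hΛ2⟩ :=
        geometric_hahn_banach_closed_point himgconv himgcpt.isClosed hcnot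
      -- decompose Λ over the finite coordinates
      have hdecomp : ∀ y : ↥u → ℝ, Λ y = ∑ i : ↥u, y i * Λ (fun j => if i = j then 1 else 0) := by
        intro y
        conv_lhs => rw [pi_eq_sum_univ y]
        rw [map_sum]
        simp [smul_eq_mul]
      set g : C(X, ℝ) := ∑ i : ↥u, Λ (fun j => if i = j then 1 else 0) • rest (i : E →L[ℝ] ℝ)
        with hg
      have hgval : ∀ x : X, g x = Λ (L x) := by
        intro x
        rw [hdecomp (L x)]
        simp only [hg, ContinuousMap.coe_sum, ContinuousMap.coe_smul, Finset.sum_apply,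
          Pi.smul_apply, smul_eq_mul]
        refine Finset.sum_congr rfl fun i _ => ?_
        have : L (x : E) i = (i : E →L[ℝ] ℝ) (x : E) := rfl
        rw [this]
        simp [hrest, mul_comm]
      have hφg : φ g = Λ c := by
        rw [hg, map_sum, hdecomp c]
        refine Finset.sum_congr rfl fun i _ => ?_
        rw [map_smul]
        simp [hc, smul_eq_mul, mul_comm]
      have h1 : φ g ≤ b := by
        apply hmono
        intro x
        exact le_of_lt (hΛ1 _ ⟨x, x.2, rfl⟩) |>.trans_eq' (hgval x).symm
      rw [hφg] at h1
      linarith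
  obtain ⟨x₀, hx₀X, hx₀⟩ := key
  simp only [Set.mem_iInter, Set.mem_setOf_eq] at hx₀
  refine ⟨x₀, hx₀X, ?_⟩
  -- Step 2: evaluation on affine functions, via separation in `E × ℝ`
  intro f haff
  haveI : CompactSpace X := isCompact_iff_compactSpace.mp hXcpt
  set T : X → E × ℝ := fun x => ((x : E), f x) with hT
  set G : Set (E × ℝ) := Set.range T with hG
  have hGcpt : IsCompact G := isCompact_range (by
    exact (continuous_subtype_val.prodMk f.continuous))
  have hGconv : Convex ℝ G := by
    intro p hp q hq a b ha hb hab
    obtain ⟨x, rfl⟩ := hp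
    obtain ⟨y, rfl⟩ := hq
    have hb' : b = 1 - a := by linarith
    subst hb'
    refine ⟨⟨a • (x:E) + (1-a) • (y:E), hXconv x.2 y.2 ha (by linarith) (by ring)⟩, ?_⟩
    have := haff x y x.2 y.2 a ha (by linarith)
    simp only [hT, Prod.ext_iff]
    constructor
    · rfl
    · simp only [Prod.snd_add, Prod.smul_snd, smul_eq_mul]
      rw [show (⟨a • (x:E) + (1-a) • (y:E), _⟩ : X) =
        (⟨a • (x:E) + (1-a) • (y:E), hXconv x.2 y.2 ha (by linarith) (by ring)⟩ : X) from rfl]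
      rw [this]
  by_contra hne
  have hnotin : ((x₀, φ f) : E × ℝ) ∉ G := by
    rintro ⟨y, hy⟩
    apply hne
    have h1 : (y : E) = x₀ := congrArg Prod.fst hy
    have h2 : f y = φ f := congrArg Prod.snd hy
    rw [← h2]
    congr 1
    exact Subtype.ext h1
  obtain ⟨Λ, b, hΛ1, hΛ2⟩ :=
    geometric_hahn_banach_closed_point hGconv hGcpt.isClosed hnotin
  set ℓ : E →L[ℝ] ℝ := Λ.comp (ContinuousLinearMap.inl ℝ E ℝ) with hℓ
  have hΛsplit : ∀ (x : E) (t : ℝ), Λ (x, t) = ℓ x + t * Λ (0, 1) := by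
    intro x t
    have : ((x, t) : E × ℝ) = (x, 0) + t • ((0:E), (1:ℝ)) := by
      simp [Prod.ext_iff]
    rw [this, map_add, map_smul]
    simp [hℓ, smul_eq_mul]
  set g : C(X, ℝ) := rest ℓ + Λ (0, 1) • f with hg2
  have hφg : φ g = Λ (x₀, φ f) := by
    rw [hg2, map_add, map_smul, (hx₀ ℓ).symm, hΛsplit x₀ (φ f)]
    simp only [smul_eq_mul]
    ring
  have h1 : φ g ≤ b := by
    apply hmono
    intro x
    have := hΛ1 (T x) ⟨x, rfl⟩
    rw [hΛsplit] at this
    simp only [hg2, ContinuousMap.add_apply, ContinuousMap.smul_apply, smul_eq_mul, hrest]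
    calc ℓ (x : E) + Λ (0,1) * f x = ℓ (x:E) + f x * Λ (0,1) := by ring
    _ ≤ b := le_of_lt this
  rw [hφg] at h1
  linarith
end

section
/- Let A be a unital C*-algebra and let τ be a positive tracial linear functional on A (τ(x*x) ≥ 0 and τ(xy) = τ(yx) for all x, y ∈ A). Let ε > 0, let a, v ∈ A with v·|a| = a where |a| = (a*a)^{1/2}, and let p ∈ A be a projection with p ≤ ε^{-2}·a*a. Then ‖(v − 1)p‖_{2,τ} ≤ ε^{-1}·‖a − |a|‖_{2,τ}. -/
/-!
Put `c = (v - 1)⋆(v - 1) ≥ 0`. By traciality `‖(v - 1)p‖²_{2,τ} = τ(c p)` and, since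
`a - |a| = (v - 1)|a|`, `‖a - |a|‖²_{2,τ} = τ(c a⋆a)`. The trace of a product of two
positive elements is nonnegative, so `τ(c (ε⁻² a⋆a - p)) ≥ 0`, which is the squared
inequality.
-/

open scoped ComplexOrder

lemma cfc_real_sqrt_mul_self {A : Type*} [CStarAlgebra A] [PartialOrder A] [StarOrderedRing A]
    (a : A) (ha : 0 ≤ a) : cfc Real.sqrt a * cfc Real.sqrt a = a := by
  rw [← cfcₙ_eq_cfc, ← CFC.sqrt_eq_real_sqrt a, CFC.sqrt_mul_sqrt_self a]

section Ring

variable {A : Type*} [NonUnitalRing A] [StarRing A] [Module ℂ A] (τ : A →ₗ[ℂ] ℂ)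

lemma trace_star_mul_self_mul_eq (hτtr : ∀ x y : A, τ (x * y) = τ (y * x)) (x b : A) :
    τ (star (x * b) * (x * b)) = τ (star x * x * (b * star b)) := by
  rw [star_mul, mul_assoc, hτtr]
  simp only [mul_assoc]

lemma trace_star_mul_self_mul_star_mul_self_nonneg (hτpos : ∀ x : A, 0 ≤ τ (star x * x))
    (hτtr : ∀ x y : A, τ (x * y) = τ (y * x)) (s t : A) :
    0 ≤ τ (star s * s * (star t * t)) := by
  simpa only [trace_star_mul_self_mul_eq τ hτtr, star_star] using hτpos (s * star t)

end Ring

section CStarAlgebra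

variable {A : Type*} [CStarAlgebra A] [PartialOrder A] [StarOrderedRing A] (τ : A →ₗ[ℂ] ℂ)

lemma trace_mul_nonneg (hτpos : ∀ x : A, 0 ≤ τ (star x * x))
    (hτtr : ∀ x y : A, τ (x * y) = τ (y * x)) {c d : A} (hc : 0 ≤ c) (hd : 0 ≤ d) :
    0 ≤ τ (c * d) := by
  obtain ⟨s, rfl⟩ := CStarAlgebra.nonneg_iff_eq_star_mul_self.mp hc
  obtain ⟨t, rfl⟩ := CStarAlgebra.nonneg_iff_eq_star_mul_self.mp hd
  exact trace_star_mul_self_mul_star_mul_self_nonneg τ hτpos hτtr s t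

lemma norm2_mul_le_of_mul_star_le (hτpos : ∀ x : A, 0 ≤ τ (star x * x))
    (hτtr : ∀ x y : A, τ (x * y) = τ (y * x)) (x b₁ b₂ : A) {r : ℝ}
    (h : b₁ * star b₁ ≤ r • (b₂ * star b₂)) :
    norm2 τ (x * b₁) ≤ √r * norm2 τ (x * b₂) := by
  have hsq_nonneg : 0 ≤ (τ (star x * x * (b₂ * star b₂))).re := by
    simpa only [trace_star_mul_self_mul_eq τ hτtr, Complex.zero_re]
      using (Complex.le_def.mp (hτpos (x * b₂))).1
  have hsq_le : (τ (star x * x * (b₁ * star b₁))).re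
      ≤ r * (τ (star x * x * (b₂ * star b₂))).re := by
    have := trace_mul_nonneg τ hτpos hτtr (star_mul_self_nonneg x) (sub_nonneg.mpr h)
    rw [mul_sub, mul_smul_comm, map_sub, LinearMap.map_smul_of_tower, sub_nonneg] at this
    simpa only [Complex.real_smul, Complex.re_ofReal_mul] using (Complex.le_def.mp this).1
  simp only [norm2, trace_star_mul_self_mul_eq τ hτtr]
  rw [← Real.sqrt_mul' _ hsq_nonneg]
  exact Real.sqrt_le_sqrt hsq_le

end CStarAlgebra

/-- Let `τ` be a positive tracial linear functional on a unital C*-algebra `A`, let `ε > 0`,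
let `a, v ∈ A` with `v·|a| = a` where `|a| = (a*a)^{1/2}`, and let `p` be a projection with
`p ≤ ε⁻²·a*a`.  Then `‖(v - 1)p‖_{2,τ} ≤ ε⁻¹·‖a - |a|‖_{2,τ}`. -/
theorem norm2_partial_isometry_estimate
    {A : Type*} [CStarAlgebra A] [PartialOrder A] [StarOrderedRing A]
    (τ : A →ₗ[ℂ] ℂ)
    (hτpos : ∀ x : A, 0 ≤ τ (star x * x))
    (hτtr : ∀ x y : A, τ (x * y) = τ (y * x))
    (ε : ℝ) (hε : 0 < ε)
    (a v : A) (hv : v * cfc Real.sqrt (star a * a) = a)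
    (p : A) (hpproj : star p = p ∧ p * p = p)
    (hple : p ≤ (ε ^ 2)⁻¹ • (star a * a)) :
    norm2 τ ((v - 1) * p) ≤ ε⁻¹ * norm2 τ (a - cfc Real.sqrt (star a * a)) := by
  obtain ⟨hp_star, hp_idem⟩ := hpproj
  have habs : IsSelfAdjoint (cfc Real.sqrt (star a * a)) := cfc_predicate _ _
  calc norm2 τ ((v - 1) * p)
      ≤ √((ε ^ 2)⁻¹) * norm2 τ ((v - 1) * cfc Real.sqrt (star a * a)) := by
        refine norm2_mul_le_of_mul_star_le τ hτpos hτtr _ _ _ ?_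
        rwa [hp_star, hp_idem, habs.star_eq, cfc_real_sqrt_mul_self _ (star_mul_self_nonneg a)]
    _ = ε⁻¹ * norm2 τ (a - cfc Real.sqrt (star a * a)) := by
        rw [Real.sqrt_inv, Real.sqrt_sq hε.le, sub_mul, one_mul, hv]
end

section
/- Let A be a unital C*-algebra, let p ∈ A be a projection, let w ∈ A be a unitary, and let v ∈ A satisfy v·p·v* = w·p·w*. Define u = v·p + w·(1 − p). Then u·u* = 1, and for every positive tracial linear functional τ on A one has ‖u − 1‖_{2,τ} ≤ ‖(v − 1)p‖_{2,τ} + ‖(w − 1)(1 − p)‖_{2,τ}. -/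
open scoped ComplexOrder

/-! As `p(1 - p) = 0`, the cross terms of `uu*` vanish and
`uu* = vpv* + w(1 - p)w* = wpw* + w(1 - p)w* = ww*`. With respect to a trace, `u - 1` splits as
`(v - 1)p + (w - 1)(1 - p)`, a sum of two terms that are orthogonal in `L²(τ)` because
`τ(p x (1 - p)) = τ((1 - p) p x) = 0`; Pythagoras and `√(a + b) ≤ √a + √b` conclude. -/

lemma Real.sqrt_add_le_add_sqrt {a b : ℝ} (ha : 0 ≤ a) (hb : 0 ≤ b) :
    √(a + b) ≤ √a + √b := by
  rw [Real.sqrt_le_left (by positivity), add_sq, Real.sq_sqrt ha, Real.sq_sqrt hb]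
  linarith [mul_nonneg (Real.sqrt_nonneg a) (Real.sqrt_nonneg b)]

lemma IsStarProjection.glue_mul_star_glue {R : Type*} [Ring R] [StarRing R] {p v w : R}
    (hp : IsStarProjection p) (hvw : v * p * star v = w * p * star w) :
    (v * p + w * (1 - p)) * star (v * p + w * (1 - p)) = w * star w := by
  have hstar : star (v * p + w * (1 - p)) = p * star v + (1 - p) * star w := by
    simp only [star_add, star_mul, star_sub, star_one, hp.isSelfAdjoint.star_eq]
  calc (v * p + w * (1 - p)) * star (v * p + w * (1 - p))
      = v * (p * p) * star v + v * (p * (1 - p)) * star w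
          + w * ((1 - p) * p) * star v + w * ((1 - p) * (1 - p)) * star w := by
        rw [hstar]; noncomm_ring
    _ = v * p * star v + w * (1 - p) * star w := by
        rw [hp.isIdempotentElem.eq, hp.mul_one_sub_self, hp.one_sub_mul_self,
          hp.isIdempotentElem.one_sub.eq]
        simp only [mul_zero, zero_mul, add_zero]
    _ = w * star w := by rw [hvw]; noncomm_ring

section Trace

variable {R A M : Type*} [CommSemiring R] [Ring A] [StarRing A] [Module R A]
  [AddCommMonoid M] [Module R M] (τ : A →ₗ[R] M)

lemma LinearMap.map_star_mul_mul_one_sub_eq_zero {p : A}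
    (htr : ∀ x y : A, τ (x * y) = τ (y * x)) (hp : IsStarProjection p) (x y : A) :
    τ (star (x * p) * (y * (1 - p))) = 0 := by
  have : star (x * p) * (y * (1 - p)) = p * (star x * y) * (1 - p) := by
    rw [star_mul, hp.isSelfAdjoint.star_eq]; noncomm_ring
  rw [this, htr, ← mul_assoc, hp.one_sub_mul_self, zero_mul, map_zero]

lemma LinearMap.map_star_mul_one_sub_mul_eq_zero {p : A}
    (htr : ∀ x y : A, τ (x * y) = τ (y * x)) (hp : IsStarProjection p) (x y : A) :
    τ (star (x * (1 - p)) * (y * p)) = 0 := by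
  simpa only [sub_sub_cancel] using τ.map_star_mul_mul_one_sub_eq_zero htr hp.one_sub x y

end Trace

lemma norm2_add_le_of_orthogonal {A : Type*} [NonUnitalRing A] [StarRing A] [Module ℂ A]
    (τ : A →ₗ[ℂ] ℂ) (hpos : ∀ x : A, 0 ≤ τ (star x * x)) {a b : A}
    (hab : τ (star a * b) = 0) (hba : τ (star b * a) = 0) :
    norm2 τ (a + b) ≤ norm2 τ a + norm2 τ b := by
  have hpyth : τ (star (a + b) * (a + b)) = τ (star a * a) + τ (star b * b) := by
    simp only [star_add, add_mul, mul_add, map_add, hab, hba, add_zero, zero_add]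
  rw [norm2, hpyth, Complex.add_re]
  exact Real.sqrt_add_le_add_sqrt (Complex.nonneg_iff.mp (hpos a)).1
    (Complex.nonneg_iff.mp (hpos b)).1

/-- Let `p` be a projection in a unital C*-algebra `A`, let `w` be a unitary and let
`v ∈ A` satisfy `vpv* = wpw*`.  Then `u = vp + w(1 - p)` satisfies `uu* = 1` and, for any
positive tracial linear functional `τ`,
`‖u - 1‖_{2,τ} ≤ ‖(v - 1)p‖_{2,τ} + ‖(w - 1)(1 - p)‖_{2,τ}`. -/
theorem glued_unitary_estimate
    {A : Type*} [CStarAlgebra A]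
    (p : A) (hpproj : star p = p ∧ p * p = p)
    (w : A) (hw : star w * w = 1 ∧ w * star w = 1)
    (v : A) (hvw : v * p * star v = w * p * star w) :
    (v * p + w * (1 - p)) * star (v * p + w * (1 - p)) = 1 ∧
    ∀ τ : A →ₗ[ℂ] ℂ, (∀ x : A, 0 ≤ τ (star x * x)) → (∀ x y : A, τ (x * y) = τ (y * x)) →
      norm2 τ (v * p + w * (1 - p) - 1) ≤
        norm2 τ ((v - 1) * p) + norm2 τ ((w - 1) * (1 - p)) := by
  have hp : IsStarProjection p := ⟨hpproj.2, hpproj.1⟩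
  refine ⟨(hp.glue_mul_star_glue hvw).trans hw.2, fun τ hpos htr => ?_⟩
  have hsplit : v * p + w * (1 - p) - 1 = (v - 1) * p + (w - 1) * (1 - p) := by noncomm_ring
  rw [hsplit]
  exact norm2_add_le_of_orthogonal τ hpos (τ.map_star_mul_mul_one_sub_eq_zero htr hp _ _)
    (τ.map_star_mul_one_sub_mul_eq_zero htr hp _ _)
end
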